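/- Let X be a proper Busemann space, a : ℝ → X a geodesic line with ξ = a(+∞), and let Y ⊆ X be the union of (images of) all geodesic lines parallel to a. Assume every two parallel lines in X bound a normed strip foliated by lines parallel to a. Then the quotient metric space Y_ξ = Y/ρ_ξ (identifying points at ρ_ξ-distance 0, where ρ_ξ(x,y) is the infimal distance between the asymptotic rays [xξ], [yξ]) is a geodesic space satisfying the Busemann midpoint inequality: for the projections of three parallel lines b, c, d to points b_ξ, c_ξ, d_ξ ∈ Y_ξ, the midpoints p_ξ of [b_ξ c_ξ] and q_ξ of [b_ξ d_ξ] satisfy ρ_ξ(p_ξ, q_ξ) ≤ ρ_ξ(c_ξ, d_ξ)/2. Moreover, Y_ξ is a one-point space if and only if a has no distinct parallel line (rank one). -/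

import Mathlib

/-!
In a Busemann space the distance between matching points of two lines that stay near translates
of each other is a bounded midpoint convex function of the shift, hence constant. Consequently the
ray `[xξ]` from a point of `Y` is the forward half of a line through `x` parallel to `a`,
`ρ_ξ(x, y)` is the least distance between the lines through `x` and `y` and is attained, and the
midpoint of `b s` and `c t` depends only on `s + t`, so the midpoints of segments between two such
lines form a single line parallel to `a`.

A midpoint of a minimizing segment is a `ρ_ξ`-midpoint, and it lies in `Y` by the strip lemma.
Conversely every `ρ_ξ`-midpoint lies on a line of midpoints, so the Busemann inequality in `X` for
midpoints of segments issuing from one point passes to `Y_ξ`. Finally `ρ_ξ(x, y) = 0` says that the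
lines through `x` and `y` meet, hence coincide.
-/

open Set Filter

section Midpoints

variable {X : Type*}

def IsMidpoint [PseudoMetricSpace X] (x y m : X) : Prop :=
  dist x m = dist x y / 2 ∧ dist m y = dist x y / 2

class BusemannSpace (X : Type*) [PseudoMetricSpace X] : Prop where
  exists_isMidpoint : ∀ x y : X, ∃ m, IsMidpoint x y m
  dist_le_half : ∀ {x y z m n : X}, IsMidpoint x y m → IsMidpoint x z n → dist m n ≤ dist y z / 2

variable [PseudoMetricSpace X] {x y m : X}

lemma IsMidpoint.symm (h : IsMidpoint x y m) : IsMidpoint y x m := by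
  unfold IsMidpoint at *
  rw [dist_comm y x, dist_comm y m, dist_comm m x]
  exact h.symm

lemma IsMidpoint.dist_add (h : IsMidpoint x y m) : dist x m + dist m y = dist x y := by
  rw [h.1, h.2]; ring

lemma isMidpoint_of_dist_le (hx : dist x m ≤ dist x y / 2) (hy : dist m y ≤ dist x y / 2) :
    IsMidpoint x y m := by
  have := dist_triangle x m y
  exact ⟨by linarith, by linarith⟩

lemma isMidpoint_of_dist_eq_abs {s t μ : ℝ} (hμ : μ = (s + t) / 2) (hxm : dist x m = |s - μ|)
    (hmy : dist m y = |μ - t|) (hxy : dist x y = |s - t|) : IsMidpoint x y m := by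
  have h₁ : s - μ = (s - t) / 2 := by rw [hμ]; ring
  have h₂ : μ - t = (s - t) / 2 := by rw [hμ]; ring
  rw [h₁, abs_div, abs_two] at hxm
  rw [h₂, abs_div, abs_two] at hmy
  exact ⟨by rw [hxm, hxy], by rw [hmy, hxy]⟩

lemma Isometry.isMidpoint {b : ℝ → X} (hb : Isometry b) {s t μ : ℝ} (hμ : μ = (s + t) / 2) :
    IsMidpoint (b s) (b t) (b μ) := by
  refine isMidpoint_of_dist_eq_abs hμ ?_ ?_ ?_ <;> rw [hb.dist_eq, Real.dist_eq]

variable [BusemannSpace X]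

lemma dist_le_of_isMidpoint {p₁ p₂ q₁ q₂ n : X} (hm : IsMidpoint p₁ p₂ m)
    (hn : IsMidpoint q₁ q₂ n) : dist m n ≤ (dist p₁ q₁ + dist p₂ q₂) / 2 := by
  obtain ⟨k, hk⟩ := BusemannSpace.exists_isMidpoint p₁ q₂
  have h₁ : dist m k ≤ dist p₂ q₂ / 2 := BusemannSpace.dist_le_half hm hk
  have h₂ : dist n k ≤ dist q₁ p₁ / 2 := BusemannSpace.dist_le_half hn.symm hk.symm
  linarith [dist_triangle m k n, dist_comm k n, dist_comm q₁ p₁]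

end Midpoints

lemma IsMidpoint.eq {X : Type*} [MetricSpace X] [BusemannSpace X] {x y m n : X}
    (hm : IsMidpoint x y m) (hn : IsMidpoint x y n) : m = n := by
  have := BusemannSpace.dist_le_half hm hn
  rw [dist_self, zero_div] at this
  exact dist_le_zero.1 this

section MidpointConvex

variable {φ : ℝ → ℝ} {M : ℝ}

lemma antitoneOn_of_midpoint_convex
    (hφ : ∀ s t, 0 ≤ s → 0 ≤ t → φ ((s + t) / 2) ≤ (φ s + φ t) / 2)
    (hM : ∀ s, 0 ≤ s → φ s ≤ M) : AntitoneOn φ (Ici 0) := by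
  rintro s (hs : 0 ≤ s) t - hst
  by_contra! hlt
  have growth : ∀ n : ℕ, φ s + 2 ^ n * (φ t - φ s) ≤ φ (s + 2 ^ n * (t - s)) := by
    intro n
    induction n with
    | zero => simp
    | succ n ih =>
      have h := hφ s (s + 2 ^ (n + 1) * (t - s)) hs (by have := sub_nonneg.2 hst; positivity)
      rw [show (s + (s + 2 ^ (n + 1) * (t - s))) / 2 = s + 2 ^ n * (t - s) by ring] at h
      rw [pow_succ] at h ⊢
      linarith
  obtain ⟨n, hn⟩ := pow_unbounded_of_one_lt ((M - φ s) / (φ t - φ s)) one_lt_two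
  rw [div_lt_iff₀ (sub_pos.2 hlt)] at hn
  have := hM (s + 2 ^ n * (t - s)) (by have := sub_nonneg.2 hst; positivity)
  linarith [growth n]

lemma antitone_of_midpoint_convex (hφ : ∀ s t, φ ((s + t) / 2) ≤ (φ s + φ t) / 2)
    (hM : ∀ s, φ s ≤ M) : Antitone φ := by
  intro s t hst
  have := antitoneOn_of_midpoint_convex (φ := fun v => φ (s + v)) (M := M)
    (fun u v _ _ => by simpa [add_add_add_comm, add_div] using hφ (s + u) (s + v))
    (fun v _ => hM _) (le_refl (0 : ℝ)) (sub_nonneg.2 hst) (sub_nonneg.2 hst)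
  simpa using this

lemma eq_of_midpoint_convex (hφ : ∀ s t, φ ((s + t) / 2) ≤ (φ s + φ t) / 2)
    (hM : ∀ s, φ s ≤ M) (s t : ℝ) : φ s = φ t := by
  have hanti := antitone_of_midpoint_convex hφ hM
  have hmono : Monotone φ := by
    have := antitone_of_midpoint_convex (φ := fun v => φ (-v)) (M := M)
      (fun u v => by rw [show -((u + v) / 2) = (-u + -v) / 2 by ring]; exact hφ (-u) (-v))
      (fun v => hM _)
    exact fun u v huv => by simpa using this (neg_le_neg huv)
  rcases le_total s t with h | h
  · exact le_antisymm (hmono h) (hanti h)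
  · exact le_antisymm (hanti h) (hmono h)

end MidpointConvex

section Lines

variable {X : Type*} [PseudoMetricSpace X] {a b c : ℝ → X}

def OrientedParallel (a b : ℝ → X) : Prop :=
  ∃ u K : ℝ, ∀ w, dist (b w) (a (u + w)) ≤ K

def CoarselyParallel (a b : ℝ → X) : Prop :=
  ∃ C : ℝ, (∀ s, ∃ t, dist (a s) (b t) ≤ C) ∧ (∀ t, ∃ s, dist (a s) (b t) ≤ C)

namespace OrientedParallel

lemma refl (a : ℝ → X) : OrientedParallel a a := ⟨0, 0, fun w => by simp⟩

lemma symm (h : OrientedParallel a b) : OrientedParallel b a := by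
  obtain ⟨u, K, h⟩ := h
  exact ⟨-u, K, fun w => by simpa [dist_comm] using h (-u + w)⟩

lemma trans (hab : OrientedParallel a b) (hbc : OrientedParallel b c) : OrientedParallel a c := by
  obtain ⟨u, K, hab⟩ := hab
  obtain ⟨u', K', hbc⟩ := hbc
  refine ⟨u + u', K' + K, fun w => ?_⟩
  calc dist (c w) (a (u + u' + w))
      ≤ dist (c w) (b (u' + w)) + dist (b (u' + w)) (a (u + (u' + w))) := by
        rw [add_assoc]; exact dist_triangle _ _ _
    _ ≤ K' + K := add_le_add (hbc w) (hab _)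

lemma comp_add_right (h : OrientedParallel a b) (t : ℝ) :
    OrientedParallel a fun w => b (w + t) := by
  obtain ⟨u, K, h⟩ := h
  exact ⟨u + t, K, fun w => by simpa [add_comm, add_left_comm] using h (w + t)⟩

lemma coarselyParallel (h : OrientedParallel a b) : CoarselyParallel a b := by
  obtain ⟨u, K, h⟩ := h
  refine ⟨K, fun s => ⟨s - u, ?_⟩, fun t => ⟨u + t, ?_⟩⟩ <;> rw [dist_comm]
  · simpa using h (s - u)
  · exact h t

end OrientedParallel

lemma Isometry.exists_forall_dist_le (hb : Isometry b) (x : X) :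
    ∃ s, ∀ t, dist (b s) x ≤ dist (b t) x := by
  refine (hb.continuous.dist continuous_const).exists_forall_le <|
    tendsto_atTop_mono (fun t => ?_) <|
      tendsto_atTop_add_const_right _ (-dist (b 0) x) (tendsto_dist_right_cocompact_atTop 0)
  linarith [dist_triangle (b t) x (b 0), hb.dist_eq t 0, dist_comm x (b 0)]

lemma abs_sub_le_or_abs_add_le {d v C : ℝ} (h : |(|d| - |v|)| ≤ C) :
    |d - v| ≤ C ∨ |d + v| ≤ C := by
  rw [abs_le] at h
  rcases abs_cases d with ⟨hd, -⟩ | ⟨hd, -⟩ <;> rcases abs_cases v with ⟨hv, -⟩ | ⟨hv, -⟩ <;>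
    rw [hd, hv] at h <;> [left; right; right; left] <;> rw [abs_le] <;> constructor <;> linarith

lemma abs_sub_add_le_or_abs_sub_sub_le (ha : Isometry a) {p q : X} {s u v C : ℝ}
    (hp : dist p (a s) ≤ C) (hq : dist q (a u) ≤ C) (hpq : dist p q = |v|) :
    |s - (u + v)| ≤ 2 * C ∨ |s - (u - v)| ≤ 2 * C := by
  have h : |(|s - u| - |v|)| ≤ 2 * C := by
    have := dist_dist_dist_le (a s) (a u) p q
    rw [ha.dist_eq, Real.dist_eq, Real.dist_eq, hpq] at this
    linarith [dist_comm p (a s), dist_comm q (a u)]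
  rcases abs_sub_le_or_abs_add_le h with h | h
  · left; rwa [← sub_sub]
  · right; rwa [sub_sub_eq_add_sub, add_sub_right_comm]

end Lines

section Orientation

variable {X : Type*} [PseudoMetricSpace X] {a b : ℝ → X}

lemma near_translate_or_reflection (ha : Isometry a) (hb : Isometry b) {u C : ℝ}
    (hu : dist (a u) (b 0) ≤ C) (hpar : ∀ t, ∃ s, dist (a s) (b t) ≤ C) (v : ℝ) :
    dist (b v) (a (u + v)) ≤ 3 * C ∨ dist (b v) (a (u - v)) ≤ 3 * C := by
  obtain ⟨s, hs⟩ := hpar v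
  have near : ∀ w, |s - w| ≤ 2 * C → dist (b v) (a w) ≤ 3 * C := fun w hw => by
    have := dist_triangle (b v) (a s) (a w)
    rw [ha.dist_eq, Real.dist_eq] at this
    linarith [dist_comm (a s) (b v)]
  refine (abs_sub_add_le_or_abs_sub_sub_le ha (p := b v) (q := b 0) ?_ ?_ ?_).imp (near _) (near _)
  · rwa [dist_comm]
  · rwa [dist_comm]
  · rw [hb.dist_eq, Real.dist_eq, sub_zero]

lemma Ici_subset_near_translate_or_reflection (ha : Isometry a) (hb : Isometry b) {u C : ℝ}
    (hu : dist (a u) (b 0) ≤ C) (hpar : ∀ t, ∃ s, dist (a s) (b t) ≤ C) :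
    Ici (3 * C + 1) ⊆ {v | dist (b v) (a (u + v)) ≤ 3 * C} ∨
      Ici (3 * C + 1) ⊆ {v | dist (b v) (a (u - v)) ≤ 3 * C} := by
  have := ha.continuous
  have := hb.continuous
  refine isPreconnected_iff_subset_of_disjoint_closed.1 isPreconnected_Ici _ _
    (isClosed_le (by fun_prop) continuous_const) (isClosed_le (by fun_prop) continuous_const)
    (fun v _ => near_translate_or_reflection ha hb hu hpar v) ?_
  refine eq_empty_iff_forall_notMem.2 ?_
  rintro v ⟨hv, h₁, h₂⟩
  simp only [mem_Ici, mem_ofPred_eq] at hv h₁ h₂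
  have := dist_triangle (a (u + v)) (b v) (a (u - v))
  rw [ha.dist_eq, Real.dist_eq, show u + v - (u - v) = 2 * v by ring, dist_comm] at this
  linarith [le_abs_self (2 * v)]

lemma orientedParallel_of_forall_ge (ha : Isometry a) (hb : Isometry b) {u C V K : ℝ}
    (hu : dist (a u) (b 0) ≤ C) (hpos : ∀ v, V ≤ v → dist (b v) (a (u + v)) ≤ K)
    (hneg : ∀ v, V ≤ v → dist (b (-v)) (a (u - v)) ≤ K) : OrientedParallel a b := by
  refine ⟨u, max K (2 * V + C), fun w => ?_⟩
  rcases le_or_gt V w with hw | hw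
  · exact (hpos w hw).trans (le_max_left _ _)
  rcases le_or_gt V (-w) with hw' | hw'
  · simpa [sub_eq_add_neg] using (hneg (-w) hw').trans (le_max_left _ _)
  have hwV : |w| < V := abs_lt.2 ⟨by linarith, hw⟩
  calc dist (b w) (a (u + w)) ≤ dist (b w) (b 0) + dist (b 0) (a u) + dist (a u) (a (u + w)) :=
        dist_triangle4 _ _ _ _
    _ ≤ 2 * V + C := by
        rw [hb.dist_eq, ha.dist_eq, Real.dist_eq, Real.dist_eq, dist_comm, sub_zero,
          sub_add_cancel_left, abs_neg]
        linarith
    _ ≤ _ := le_max_right _ _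

/-- On each end of `ℝ` the orientation is fixed by connectedness, and the two ends agree because
`b V` and `b (-V)` are too far apart to be near the same point of `a`. -/
lemma exists_orientedParallel_of_forall_exists_dist_le (ha : Isometry a) (hb : Isometry b) {C : ℝ}
    (hpar : ∀ t, ∃ s, dist (a s) (b t) ≤ C) :
    ∃ b' : ℝ → X, Isometry b' ∧ range b' = range b ∧ OrientedParallel a b' := by
  obtain ⟨u, hu⟩ := hpar 0
  have hb' : Isometry fun w => b (-w) := hb.comp isometry_neg
  have hu' : dist (a u) (b (-0)) ≤ C := by rwa [neg_zero]
  have far : ∀ w, dist (b (3 * C + 1)) (a w) ≤ 3 * C → dist (b (-(3 * C + 1))) (a w) ≤ 3 * C →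
      False := fun w h₁ h₂ => by
    have := dist_triangle (b (3 * C + 1)) (a w) (b (-(3 * C + 1)))
    rw [hb.dist_eq, Real.dist_eq, dist_comm (a w)] at this
    linarith [le_abs_self (3 * C + 1 - -(3 * C + 1))]
  rcases Ici_subset_near_translate_or_reflection ha hb hu hpar with h | h <;>
    rcases Ici_subset_near_translate_or_reflection ha hb' hu' (fun t => hpar (-t)) with h' | h'
  · exact (far _ (h self_mem_Ici) (h' self_mem_Ici)).elim
  · exact ⟨b, hb, rfl, orientedParallel_of_forall_ge ha hb hu (fun v hv => h hv) fun v hv => h' hv⟩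
  · refine ⟨_, hb', neg_surjective.range_comp b, orientedParallel_of_forall_ge ha hb' hu'
      (fun v hv => h' hv) fun v hv => ?_⟩
    simpa using h hv
  · exact (far _ (h self_mem_Ici) (by simpa [sub_eq_add_neg] using h' self_mem_Ici)).elim

end Orientation

section Rays

variable {X : Type*} [PseudoMetricSpace X] {a r : ℝ → X}

/-- Since the parameters of `a` met by the ray are nonnegative, the ray cannot run backwards
along `a` for long. -/
lemma exists_forall_dist_ray_le (ha : Isometry a)
    (hr : ∀ s t, 0 ≤ s → 0 ≤ t → dist (r s) (r t) = |s - t|) {C : ℝ}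
    (hC : ∀ t, 0 ≤ t → ∃ s, 0 ≤ s ∧ dist (r t) (a s) ≤ C) :
    ∃ u K, ∀ t, 0 ≤ t → dist (r t) (a (u + t)) ≤ K := by
  obtain ⟨u, hu, hru⟩ := hC 0 le_rfl
  have hC0 : 0 ≤ C := dist_nonneg.trans hru
  refine ⟨u, 2 * u + 5 * C, fun t ht => ?_⟩
  obtain ⟨s, hs, hrs⟩ := hC t ht
  have hrt : dist (r t) (r 0) = |t| := by rw [hr t 0 ht le_rfl, sub_zero]
  rcases abs_sub_add_le_or_abs_sub_sub_le ha hrs hru hrt with h | h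
  · have := dist_triangle (r t) (a s) (a (u + t))
    rw [ha.dist_eq, Real.dist_eq] at this
    linarith
  · have := dist_triangle4 (r t) (r 0) (a u) (a (u + t))
    rw [hrt, ha.dist_eq, Real.dist_eq, sub_add_cancel_left, abs_neg, abs_of_nonneg ht] at this
    linarith [(abs_le.1 h).2]

end Rays

section BusemannLines

variable {X : Type*} [PseudoMetricSpace X] [BusemannSpace X] {b c : ℝ → X}

/-- `v ↦ dist (b (s + v)) (c (t + v))` is midpoint convex and bounded, hence constant. -/
lemma OrientedParallel.dist_eq_of_sub_eq (hbc : OrientedParallel b c) (hb : Isometry b)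
    (hc : Isometry c) {s t s' t' : ℝ} (h : s' - t' = s - t) :
    dist (b s') (c t') = dist (b s) (c t) := by
  obtain ⟨u, K, hK⟩ := hbc
  have hb' := hb.comp (isometry_add_left s)
  have hc' := hc.comp (isometry_add_left t)
  have hconv : ∀ v w, dist (b (s + (v + w) / 2)) (c (t + (v + w) / 2)) ≤
      (dist (b (s + v)) (c (t + v)) + dist (b (s + w)) (c (t + w))) / 2 := fun v w =>
    dist_le_of_isMidpoint (hb'.isMidpoint rfl) (hc'.isMidpoint rfl)
  have hbdd : ∀ v, dist (b (s + v)) (c (t + v)) ≤ |s - (u + t)| + K := fun v => by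
    have := dist_triangle (b (s + v)) (b (u + (t + v))) (c (t + v))
    rw [hb.dist_eq, Real.dist_eq, show s + v - (u + (t + v)) = s - (u + t) by ring] at this
    linarith [hK (t + v), dist_comm (c (t + v)) (b (u + (t + v)))]
  have := eq_of_midpoint_convex hconv hbdd (s' - s) 0
  rwa [add_sub_cancel, show t + (s' - s) = t' by linarith, add_zero, add_zero] at this

end BusemannLines

section MetricBusemannLines

variable {X : Type*} [MetricSpace X] [BusemannSpace X] {a b c e r : ℝ → X}

lemma OrientedParallel.range_eq (hbc : OrientedParallel b c) (hb : Isometry b) (hc : Isometry c)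
    {s t : ℝ} (h : b s = c t) : range b = range c := by
  have key : ∀ w, b w = c (w - s + t) := fun w => dist_eq_zero.1 <| by
    rw [hbc.dist_eq_of_sub_eq hb hc (s := s) (t := t) (by ring), h, dist_self]
  refine Subset.antisymm ?_ ?_
  · rintro _ ⟨w, rfl⟩
    exact ⟨_, (key w).symm⟩
  · rintro _ ⟨w, rfl⟩
    exact ⟨w + s - t, by rw [key]; congr 1; ring⟩

lemma eqOn_Ici_of_orientedParallel (ha : Isometry a) (hb : Isometry b)
    (hab : OrientedParallel a b) (hr : ∀ s t, 0 ≤ s → 0 ≤ t → dist (r s) (r t) = |s - t|)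
    {u K : ℝ} (hra : ∀ t, 0 ≤ t → dist (r t) (a (u + t)) ≤ K) (h0 : r 0 = b 0) :
    EqOn r b (Ici 0) := by
  intro s (hs : 0 ≤ s)
  obtain ⟨u', K', hK'⟩ := hab
  have hconv : ∀ v w, 0 ≤ v → 0 ≤ w → dist (r ((v + w) / 2)) (b ((v + w) / 2)) ≤
      (dist (r v) (b v) + dist (r w) (b w)) / 2 := fun v w hv hw =>
    dist_le_of_isMidpoint (isMidpoint_of_dist_eq_abs rfl (hr _ _ hv (by positivity))
      (hr _ _ (by positivity) hw) (hr _ _ hv hw)) (hb.isMidpoint rfl)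
  have hbdd : ∀ v, 0 ≤ v → dist (r v) (b v) ≤ K + |u - u'| + K' := fun v hv => by
    have := dist_triangle4 (r v) (a (u + v)) (a (u' + v)) (b v)
    rw [ha.dist_eq, Real.dist_eq, show u + v - (u' + v) = u - u' by ring, dist_comm (a _)] at this
    linarith [hra v hv, hK' v]
  have := antitoneOn_of_midpoint_convex hconv hbdd (le_refl (0 : ℝ)) hs hs
  rw [h0, dist_self] at this
  exact dist_le_zero.1 this

/-- The midpoint of `b s` and `c t` depends only on `s + t`. -/
lemma IsMidpoint.eq_apply {s₀ t₀ s t : ℝ} {m : X} (hm : IsMidpoint (b s) (c t) m)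
    (he₀ : IsMidpoint (b s₀) (c t₀) (e 0)) (hb : Isometry b) (hc : Isometry c) (he : Isometry e)
    (hab : OrientedParallel a b) (hac : OrientedParallel a c) (hae : OrientedParallel a e) :
    m = e ((s - s₀ + (t - t₀)) / 2) := by
  have hbc := hab.symm.trans hac
  have hbe := hab.symm.trans hae
  have hec := hae.symm.trans hac
  set v := (s - s₀ + (t - t₀)) / 2 with hv
  have hD := hbc.dist_eq_of_sub_eq hb hc (s := s₀) (t := t₀) (s' := s₀ + v) (t' := t₀ + v) (by ring)
  have h₁ := dist_le_of_isMidpoint hm (hb.isMidpoint (s := s) (t := t + (s₀ - t₀)) (μ := s₀ + v)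
    (by rw [hv]; ring))
  have h₂ := dist_le_of_isMidpoint hm (hc.isMidpoint (s := s - (s₀ - t₀)) (t := t) (μ := t₀ + v)
    (by rw [hv]; ring))
  rw [dist_self, dist_comm (c t), hbc.dist_eq_of_sub_eq hb hc (s := s₀) (t := t₀) (by ring)] at h₁
  rw [dist_self, hbc.dist_eq_of_sub_eq hb hc (s := s₀) (t := t₀) (by ring)] at h₂
  have hmid : IsMidpoint (b (s₀ + v)) (c (t₀ + v)) m :=
    isMidpoint_of_dist_le (by rw [hD, dist_comm]; linarith) (by rw [hD]; linarith)
  refine hmid.eq ⟨?_, ?_⟩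
  · rw [hbe.dist_eq_of_sub_eq hb he (s := s₀) (t := 0) (by ring), hD, he₀.1]
  · rw [hec.dist_eq_of_sub_eq he hc (s := 0) (t := t₀) (by ring), hD, he₀.2]

end MetricBusemannLines

section RayDist

variable {X : Type*} [MetricSpace X] {a b c d : ℝ → X} {ray : X → ℝ → X}

noncomputable def rayDist (ray : X → ℝ → X) (x y : X) : ℝ :=
  sInf {r : ℝ | ∃ s t : ℝ, 0 ≤ s ∧ 0 ≤ t ∧ r = dist (ray x s) (ray y t)}

def parallelSet (a : ℝ → X) : Set X :=
  {x | ∃ b : ℝ → X, Isometry b ∧ CoarselyParallel a b ∧ x ∈ range b}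

structure IsRayLine (a : ℝ → X) (ray : X → ℝ → X) (x : X) (b : ℝ → X) : Prop where
  isometry : Isometry b
  apply_zero : b 0 = x
  orientedParallel : OrientedParallel a b
  eqOn : EqOn (ray x) b (Ici 0)

def HasRayLines (a : ℝ → X) (ray : X → ℝ → X) : Prop :=
  ∀ b : ℝ → X, Isometry b → CoarselyParallel a b →
    ∀ t, ∃ c, IsRayLine a ray (b t) c ∧ range c = range b

/-- What the normed strip lemma provides: geodesic segments between lines parallel to `a` stay in
the parallel set. -/
def ParallelSetConvex (a : ℝ → X) : Prop :=
  ∀ b c : ℝ → X, Isometry b → Isometry c → CoarselyParallel a b → CoarselyParallel a c →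
    ∀ p ∈ range b, ∀ q ∈ range c, ∀ z : X, dist p z + dist z q = dist p q → z ∈ parallelSet a

lemma HasRayLines.exists_isRayLine (h : HasRayLines a ray) {x : X} (hx : x ∈ parallelSet a) :
    ∃ b, IsRayLine a ray x b := by
  obtain ⟨b, hb, hab, t, rfl⟩ := hx
  obtain ⟨c, hc, -⟩ := h b hb hab t
  exact ⟨c, hc⟩

lemma ParallelSetConvex.mem_of_isMidpoint (h : ParallelSetConvex a) {x y m : X} {s t : ℝ}
    (hx : IsRayLine a ray x b) (hy : IsRayLine a ray y c) (hm : IsMidpoint (b s) (c t) m) :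
    m ∈ parallelSet a :=
  h b c hx.isometry hy.isometry hx.orientedParallel.coarselyParallel
    hy.orientedParallel.coarselyParallel _ ⟨s, rfl⟩ _ ⟨t, rfl⟩ m hm.dist_add

variable [BusemannSpace X]

lemma hasRayLines (ha : Isometry a) (hray₀ : ∀ x, ray x 0 = x)
    (hray : ∀ x s t, 0 ≤ s → 0 ≤ t → dist (ray x s) (ray x t) = |s - t|)
    (hasymp : ∀ x, ∃ C, ∀ t, 0 ≤ t → ∃ s, 0 ≤ s ∧ dist (ray x t) (a s) ≤ C) :
    HasRayLines a ray := by
  rintro b hb ⟨C, -, hC⟩ t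
  obtain ⟨b', hb', hrange, hab'⟩ := exists_orientedParallel_of_forall_exists_dist_le ha hb hC
  obtain ⟨t', ht'⟩ : b t ∈ range b' := hrange ▸ mem_range_self t
  have hc : Isometry fun w => b' (w + t') := hb'.comp (isometry_add_right t')
  have hc₀ : b' (0 + t') = b t := by rw [zero_add, ht']
  obtain ⟨C', hC'⟩ := hasymp (b t)
  obtain ⟨u, K, hK⟩ := exists_forall_dist_ray_le ha (hray (b t)) hC'
  refine ⟨_, ⟨hc, hc₀, hab'.comp_add_right t', ?_⟩,
    ((add_right_surjective t').range_comp b').trans hrange⟩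
  exact eqOn_Ici_of_orientedParallel ha hc (hab'.comp_add_right t') (hray (b t)) hK
    (by rw [hray₀, hc₀])

namespace IsRayLine

variable {x y z : X}

lemma dist_eq_of_sub_eq (hx : IsRayLine a ray x b) (hy : IsRayLine a ray y c) {s t s' t' : ℝ}
    (h : s' - t' = s - t) : dist (b s') (c t') = dist (b s) (c t) :=
  (hx.orientedParallel.symm.trans hy.orientedParallel).dist_eq_of_sub_eq hx.isometry hy.isometry h

lemma isLeast_rayDist (hx : IsRayLine a ray x b) (hy : IsRayLine a ray y c) :
    IsLeast (range fun p : ℝ × ℝ => dist (b p.1) (c p.2)) (rayDist ray x y) := by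
  have hS : {r : ℝ | ∃ s t : ℝ, 0 ≤ s ∧ 0 ≤ t ∧ r = dist (ray x s) (ray y t)} =
      range fun p : ℝ × ℝ => dist (b p.1) (c p.2) := by
    ext
    constructor
    · rintro ⟨s, t, hs, ht, rfl⟩
      exact ⟨(s, t), by rw [hx.eqOn hs, hy.eqOn ht]⟩
    · rintro ⟨⟨s, t⟩, rfl⟩
      have hs : 0 ≤ s + (|s| + |t|) := by linarith [neg_abs_le s, abs_nonneg t]
      have ht : 0 ≤ t + (|s| + |t|) := by linarith [neg_abs_le t, abs_nonneg s]
      refine ⟨_, _, hs, ht, ?_⟩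
      rw [hx.eqOn hs, hy.eqOn ht, hx.dist_eq_of_sub_eq hy (s := s) (t := t) (by ring)]
  obtain ⟨δ, hδ⟩ := hx.isometry.exists_forall_dist_le (c 0)
  have hleast : IsLeast (range fun p : ℝ × ℝ => dist (b p.1) (c p.2)) (dist (b δ) (c 0)) := by
    refine ⟨⟨(δ, 0), rfl⟩, ?_⟩
    rintro _ ⟨⟨s, t⟩, rfl⟩
    show dist (b δ) (c 0) ≤ dist (b s) (c t)
    rw [hx.dist_eq_of_sub_eq hy (s' := s) (t' := t) (s := s - t) (t := 0) (by ring)]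
    exact hδ _
  rwa [rayDist, hS, hleast.csInf_eq]

lemma rayDist_le (hx : IsRayLine a ray x b) (hy : IsRayLine a ray y c) (s t : ℝ) :
    rayDist ray x y ≤ dist (b s) (c t) :=
  (hx.isLeast_rayDist hy).2 ⟨(s, t), rfl⟩

lemma exists_rayDist_eq (hx : IsRayLine a ray x b) (hy : IsRayLine a ray y c) :
    ∃ s t, rayDist ray x y = dist (b s) (c t) :=
  let ⟨⟨s, t⟩, h⟩ := (hx.isLeast_rayDist hy).1
  ⟨s, t, h.symm⟩

lemma rayDist_nonneg (hx : IsRayLine a ray x b) (hy : IsRayLine a ray y c) :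
    0 ≤ rayDist ray x y :=
  let ⟨_, _, h⟩ := hx.exists_rayDist_eq hy
  h ▸ dist_nonneg

lemma rayDist_triangle (hx : IsRayLine a ray x b) (hy : IsRayLine a ray y c)
    (hz : IsRayLine a ray z d) : rayDist ray x z ≤ rayDist ray x y + rayDist ray y z := by
  obtain ⟨s, t, hxy⟩ := hx.exists_rayDist_eq hy
  obtain ⟨t', r, hyz⟩ := hy.exists_rayDist_eq hz
  rw [hxy, hyz, ← hy.dist_eq_of_sub_eq hz (s' := t) (t' := r + t - t') (by ring)]
  exact (hx.rayDist_le hz s _).trans (dist_triangle _ _ _)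

lemma exists_isMidpoint (hx : IsRayLine a ray x b) (hy : IsRayLine a ray y c)
    (hm : IsRayLine a ray m d) (hxm : rayDist ray x m = rayDist ray x y / 2)
    (hmy : rayDist ray m y = rayDist ray x y / 2) : ∃ s t, IsMidpoint (b s) (c t) m := by
  obtain ⟨s, t, h₁⟩ := hx.exists_rayDist_eq hm
  obtain ⟨s', t', h₂⟩ := hm.exists_rayDist_eq hy
  rw [hx.dist_eq_of_sub_eq hm (s' := s) (t' := t) (s := s - t) (t := 0) (by ring),
    hm.apply_zero] at h₁
  rw [hm.dist_eq_of_sub_eq hy (s' := s') (t' := t') (s := 0) (t := t' - s') (by ring),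
    hm.apply_zero] at h₂
  have := hx.rayDist_le hy (s - t) (t' - s')
  have := dist_triangle (b (s - t)) m (c (t' - s'))
  exact ⟨s - t, t' - s', isMidpoint_of_dist_le (by linarith) (by linarith)⟩

lemma exists_apply_eq_of_isMidpoint (hx : IsRayLine a ray x b) (hy : IsRayLine a ray y c)
    (hm : IsRayLine a ray m d) (hxm : rayDist ray x m = rayDist ray x y / 2)
    (hmy : rayDist ray m y = rayDist ray x y / 2) {F : X} {s t : ℝ}
    (hF : IsMidpoint (b s) (c t) F) : ∃ v, d v = F := by
  obtain ⟨s₀, t₀, h₀⟩ := hx.exists_isMidpoint hy hm hxm hmy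
  rw [← hm.apply_zero] at h₀
  exact ⟨_, (hF.eq_apply h₀ hx.isometry hy.isometry hm.isometry hx.orientedParallel
    hy.orientedParallel hm.orientedParallel).symm⟩

end IsRayLine

end RayDist

section Quotient

variable {X : Type*} [MetricSpace X] [BusemannSpace X] {a : ℝ → X} {ray : X → ℝ → X}

theorem exists_rayDist_midpoint (hL : HasRayLines a ray) (hY : ParallelSetConvex a) :
    ∀ x ∈ parallelSet a, ∀ y ∈ parallelSet a, ∃ m ∈ parallelSet a,
      rayDist ray x m = rayDist ray x y / 2 ∧ rayDist ray m y = rayDist ray x y / 2 := by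
  intro x hx y hy
  obtain ⟨b, hb⟩ := hL.exists_isRayLine hx
  obtain ⟨c, hc⟩ := hL.exists_isRayLine hy
  obtain ⟨s, t, hst⟩ := hb.exists_rayDist_eq hc
  obtain ⟨m, hm⟩ := BusemannSpace.exists_isMidpoint (b s) (c t)
  have hmY := hY.mem_of_isMidpoint hb hc hm
  obtain ⟨e, he⟩ := hL.exists_isRayLine hmY
  have h₁ := hb.rayDist_le he s 0
  have h₂ := he.rayDist_le hc 0 t
  rw [he.apply_zero, hm.1, ← hst] at h₁
  rw [he.apply_zero, hm.2, ← hst] at h₂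
  have := hb.rayDist_triangle he hc
  exact ⟨m, hmY, by linarith, by linarith⟩

/-- With `ρ_ξ(y, z) = dist (ly s) (lz t)`, the points `m`, `n` lie on the lines through the
midpoints `F` of `[lx 0, ly s]` and `G` of `[lx 0, lz t]`, so the Busemann inequality for `F`, `G`
in `X` passes to `Y_ξ`. -/
theorem rayDist_le_of_midpoints (hL : HasRayLines a ray) (hY : ParallelSetConvex a) :
    ∀ x ∈ parallelSet a, ∀ y ∈ parallelSet a, ∀ z ∈ parallelSet a, ∀ m ∈ parallelSet a,
      ∀ n ∈ parallelSet a,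
      rayDist ray x m = rayDist ray x y / 2 → rayDist ray m y = rayDist ray x y / 2 →
      rayDist ray x n = rayDist ray x z / 2 → rayDist ray n z = rayDist ray x z / 2 →
      rayDist ray m n ≤ rayDist ray y z / 2 := by
  intro x hx y hy z hz m hm n hn hxm hmy hxn hnz
  obtain ⟨lx, hlx⟩ := hL.exists_isRayLine hx
  obtain ⟨ly, hly⟩ := hL.exists_isRayLine hy
  obtain ⟨lz, hlz⟩ := hL.exists_isRayLine hz
  obtain ⟨lm, hlm⟩ := hL.exists_isRayLine hm
  obtain ⟨ln, hln⟩ := hL.exists_isRayLine hn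
  obtain ⟨s, t, hst⟩ := hly.exists_rayDist_eq hlz
  obtain ⟨F, hF⟩ := BusemannSpace.exists_isMidpoint (lx 0) (ly s)
  obtain ⟨G, hG⟩ := BusemannSpace.exists_isMidpoint (lx 0) (lz t)
  obtain ⟨lF, hlF⟩ := hL.exists_isRayLine (hY.mem_of_isMidpoint hlx hly hF)
  obtain ⟨lG, hlG⟩ := hL.exists_isRayLine (hY.mem_of_isMidpoint hlx hlz hG)
  obtain ⟨v, hv⟩ := hlx.exists_apply_eq_of_isMidpoint hly hlm hxm hmy hF
  obtain ⟨w, hw⟩ := hlx.exists_apply_eq_of_isMidpoint hlz hln hxn hnz hG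
  have hmF := hlm.rayDist_le hlF v 0
  have hFG := hlF.rayDist_le hlG 0 0
  have hGn := hlG.rayDist_le hln 0 w
  rw [hv, hlF.apply_zero, dist_self] at hmF
  rw [hlF.apply_zero, hlG.apply_zero] at hFG
  rw [hw, hlG.apply_zero, dist_self] at hGn
  have hbusemann : dist F G ≤ rayDist ray y z / 2 := hst ▸ BusemannSpace.dist_le_half hF hG
  linarith [hlm.rayDist_triangle hlF hln, hlF.rayDist_triangle hlG hln]

theorem forall_rayDist_eq_zero_iff (ha : Isometry a) (hL : HasRayLines a ray) :
    (∀ x ∈ parallelSet a, ∀ y ∈ parallelSet a, rayDist ray x y = 0) ↔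
      ∀ b : ℝ → X, Isometry b → CoarselyParallel a b → range b = range a := by
  have haa := (OrientedParallel.refl a).coarselyParallel
  constructor
  · intro h b hb hab
    obtain ⟨c, hc, hcb⟩ := hL b hb hab 0
    obtain ⟨d, hd, hda⟩ := hL a ha haa 0
    obtain ⟨s, t, hst⟩ := hc.exists_rayDist_eq hd
    rw [h _ ⟨b, hb, hab, 0, rfl⟩ _ ⟨a, ha, haa, 0, rfl⟩, eq_comm, dist_eq_zero] at hst
    rw [← hcb, ← hda]
    exact (hc.orientedParallel.symm.trans hd.orientedParallel).range_eq hc.isometry hd.isometry hst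
  · intro h x hx y hy
    obtain ⟨b, hb⟩ := hL.exists_isRayLine hx
    obtain ⟨c, hc⟩ := hL.exists_isRayLine hy
    obtain ⟨t, ht⟩ : b 0 ∈ range c := by
      rw [h c hc.isometry hc.orientedParallel.coarselyParallel,
        ← h b hb.isometry hb.orientedParallel.coarselyParallel]
      exact mem_range_self 0
    refine le_antisymm ?_ (hb.rayDist_nonneg hc)
    simpa [ht] using hb.rayDist_le hc 0 t

end Quotient

theorem stmt13_general {X : Type*} [MetricSpace X]
    (hgeo : ∀ x y : X, ∃ m : X, dist x m = dist x y / 2 ∧ dist m y = dist x y / 2)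
    (hconv : ∀ x y z m n : X,
      dist x m = dist x y / 2 → dist m y = dist x y / 2 →
      dist x n = dist x z / 2 → dist n z = dist x z / 2 →
      dist m n ≤ dist y z / 2)
    (IsLine : (ℝ → X) → Prop)
    (hIsLine : ∀ b : ℝ → X, IsLine b ↔ ∀ s t : ℝ, dist (b s) (b t) = |s - t|)
    (Parallel : (ℝ → X) → (ℝ → X) → Prop)
    (hParallel : ∀ b c : ℝ → X, Parallel b c ↔
      ∃ C : ℝ, (∀ s : ℝ, ∃ t : ℝ, dist (b s) (c t) ≤ C) ∧
        (∀ t : ℝ, ∃ s : ℝ, dist (b s) (c t) ≤ C))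
    (a : ℝ → X) (haline : IsLine a)
    (Y : Set X)
    (hY : Y = {x : X | ∃ b : ℝ → X, IsLine b ∧ Parallel a b ∧ x ∈ Set.range b})
    (ray : X → ℝ → X)
    (hray0 : ∀ x : X, ray x 0 = x)
    (hray_geo : ∀ x : X, ∀ s t : ℝ, 0 ≤ s → 0 ≤ t →
      dist (ray x s) (ray x t) = |s - t|)
    (hray_asymp : ∀ x : X, ∃ C : ℝ, ∀ t : ℝ, 0 ≤ t →
      (∃ s : ℝ, 0 ≤ s ∧ dist (ray x t) (a s) ≤ C) ∧
      (∃ s : ℝ, 0 ≤ s ∧ dist (a t) (ray x s) ≤ C))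
    (ρ : X → X → ℝ)
    (hρ : ∀ x y : X, ρ x y =
      sInf {e : ℝ | ∃ s t : ℝ, 0 ≤ s ∧ 0 ≤ t ∧ e = dist (ray x s) (ray y t)})
    (hstrip : ∀ b c : ℝ → X, IsLine b → IsLine c → Parallel a b → Parallel a c →
      ∀ p ∈ Set.range b, ∀ q ∈ Set.range c, ∀ z : X,
        dist p z + dist z q = dist p q → z ∈ Y) :
    (∀ x ∈ Y, ∀ y ∈ Y, ∃ m ∈ Y, ρ x m = ρ x y / 2 ∧ ρ m y = ρ x y / 2) ∧
    (∀ x ∈ Y, ∀ y ∈ Y, ∀ z ∈ Y, ∀ m ∈ Y, ∀ n ∈ Y,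
      ρ x m = ρ x y / 2 → ρ m y = ρ x y / 2 →
      ρ x n = ρ x z / 2 → ρ n z = ρ x z / 2 →
      ρ m n ≤ ρ y z / 2) ∧
    ((∀ x ∈ Y, ∀ y ∈ Y, ρ x y = 0) ↔
      (∀ b : ℝ → X, IsLine b → Parallel a b → Set.range b = Set.range a)) := by
  obtain rfl : IsLine = Isometry := funext fun b => propext <|
    (hIsLine b).trans <| by simp only [isometry_iff_dist_eq, Real.dist_eq]
  obtain rfl : Parallel = CoarselyParallel := funext₂ fun b c => propext (hParallel b c)
  obtain rfl : ρ = rayDist ray := funext₂ hρ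
  subst hY
  have : BusemannSpace X := ⟨hgeo, fun hm hn => hconv _ _ _ _ _ hm.1 hm.2 hn.1 hn.2⟩
  have hL : HasRayLines a ray := hasRayLines haline hray0 hray_geo fun x =>
    (hray_asymp x).imp fun _ hC t ht => (hC t ht).1
  exact ⟨exists_rayDist_midpoint hL hstrip, rayDist_le_of_midpoints hL hstrip,
    forall_rayDist_eq_zero_iff haline hL⟩

/-- Let `a` be a geodesic line in a proper Busemann space `X` with endpoint `ξ = a(+∞)`
(represented by the assignment `ray x` of the ray `[xξ]` from each point), and let `Y` be
the union of all lines parallel to `a`.  Assuming the normed strip lemma (segments between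
lines parallel to `a` stay in `Y`), the quotient pseudometric space `(Y, ρ_ξ)` is geodesic
and satisfies the Busemann midpoint inequality; it is a one-point space iff `a` is of
rank one (every line parallel to `a` has the same image as `a`). -/
theorem stmt13 {X : Type*} [MetricSpace X] [ProperSpace X]
    (hgeo : ∀ x y : X, ∃ m : X, dist x m = dist x y / 2 ∧ dist m y = dist x y / 2)
    (hconv : ∀ x y z m n : X,
      dist x m = dist x y / 2 → dist m y = dist x y / 2 →
      dist x n = dist x z / 2 → dist n z = dist x z / 2 →
      dist m n ≤ dist y z / 2)
    (IsLine : (ℝ → X) → Prop)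
    (hIsLine : ∀ b : ℝ → X, IsLine b ↔ ∀ s t : ℝ, dist (b s) (b t) = |s - t|)
    (Parallel : (ℝ → X) → (ℝ → X) → Prop)
    (hParallel : ∀ b c : ℝ → X, Parallel b c ↔
      ∃ C : ℝ, (∀ s : ℝ, ∃ t : ℝ, dist (b s) (c t) ≤ C) ∧
        (∀ t : ℝ, ∃ s : ℝ, dist (b s) (c t) ≤ C))
    (a : ℝ → X) (haline : IsLine a)
    (Y : Set X)
    (hY : Y = {x : X | ∃ b : ℝ → X, IsLine b ∧ Parallel a b ∧ x ∈ Set.range b})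
    (ray : X → ℝ → X)
    (hray0 : ∀ x : X, ray x 0 = x)
    (hray_geo : ∀ x : X, ∀ s t : ℝ, 0 ≤ s → 0 ≤ t →
      dist (ray x s) (ray x t) = |s - t|)
    (hray_asymp : ∀ x : X, ∃ C : ℝ, ∀ t : ℝ, 0 ≤ t →
      (∃ s : ℝ, 0 ≤ s ∧ dist (ray x t) (a s) ≤ C) ∧
      (∃ s : ℝ, 0 ≤ s ∧ dist (a t) (ray x s) ≤ C))
    (ρ : X → X → ℝ)
    (hρ : ∀ x y : X, ρ x y =
      sInf {e : ℝ | ∃ s t : ℝ, 0 ≤ s ∧ 0 ≤ t ∧ e = dist (ray x s) (ray y t)})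
    (hstrip : ∀ b c : ℝ → X, IsLine b → IsLine c → Parallel a b → Parallel a c →
      ∀ p ∈ Set.range b, ∀ q ∈ Set.range c, ∀ z : X,
        dist p z + dist z q = dist p q → z ∈ Y) :
    (∀ x ∈ Y, ∀ y ∈ Y, ∃ m ∈ Y, ρ x m = ρ x y / 2 ∧ ρ m y = ρ x y / 2) ∧
    (∀ x ∈ Y, ∀ y ∈ Y, ∀ z ∈ Y, ∀ m ∈ Y, ∀ n ∈ Y,
      ρ x m = ρ x y / 2 → ρ m y = ρ x y / 2 →
      ρ x n = ρ x z / 2 → ρ n z = ρ x z / 2 →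
      ρ m n ≤ ρ y z / 2) ∧
    ((∀ x ∈ Y, ∀ y ∈ Y, ρ x y = 0) ↔
      (∀ b : ℝ → X, IsLine b → Parallel a b → Set.range b = Set.range a)) :=
  stmt13_general hgeo hconv IsLine hIsLine Parallel hParallel a haline Y hY ray hray0 hray_geo
    hray_asymp ρ hρ hstrip
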